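/- Let a, σ ≥ 0 be real numbers and let ω = e^{2πi/3}. For a real c ≥ 0 and a Boolean flag φ, let R(c, φ) be the multiset of complex numbers {c^{1/3}, c^{1/3}, c^{1/3}} if φ is true, and {c^{1/3}, c^{1/3}·ω, c^{1/3}·ω²} if φ is false. For any flags f, g, let λ_1, …, λ_6 be the six elements of the multiset R(a, f) ∪ R(σ, g) listed so that the real parts are nonincreasing and, among elements with equal real part, the imaginary parts are nonincreasing. Then a = σ if and only if at least one of the following holds: (i) λ_1 = λ_2 = λ_3 = λ_4 = λ_5 = λ_6; (ii) λ_1 = λ_2 = λ_3 = λ_4, λ_4 ≠ λ_5, and λ_5 ≠ λ_6; (iii) λ_1 = λ_2, λ_2 ≠ λ_3, λ_3 = λ_4, λ_4 ≠ λ_5, and λ_5 = λ_6. -/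

import Mathlib

set_option autoImplicit false

/-- `R(c, φ)`: for `c ≥ 0`, the multiset of three complex numbers which is three copies
of the nonnegative real cube root `c^{1/3}` if `φ` is true, and the three complex cube
roots `c^{1/3}, c^{1/3}·ω, c^{1/3}·ω²` (with `ω = e^{2πi/3}`) if `φ` is false. -/
noncomputable def cubeRootMultiset (c : ℝ) (φ : Bool) : Multiset ℂ :=
  if φ then
    {((c ^ ((1 : ℝ) / 3) : ℝ) : ℂ), ((c ^ ((1 : ℝ) / 3) : ℝ) : ℂ),
      ((c ^ ((1 : ℝ) / 3) : ℝ) : ℂ)}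
  else
    {((c ^ ((1 : ℝ) / 3) : ℝ) : ℂ),
      ((c ^ ((1 : ℝ) / 3) : ℝ) : ℂ) * Complex.exp (2 * (Real.pi : ℂ) * Complex.I / 3),
      ((c ^ ((1 : ℝ) / 3) : ℝ) : ℂ) * Complex.exp (2 * (Real.pi : ℂ) * Complex.I / 3) ^ 2}

/-
Put `A = a^{1/3}` and `S = σ^{1/3}`. In the order by nonincreasing `(re, im)` the real roots come
first, and then `tω` before `tω²` (both have real part `-t/2`). A sorted enumeration of a
multiset is unique, so `λ` is an explicit vector in each case. For `a = σ > 0` it is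
`(A,A,A,A,A,A)`, `(A,A,A,A,Aω,Aω²)` or `(A,A,Aω,Aω,Aω²,Aω²)`, giving patterns (i)–(iii), and for
`a = σ = 0` all six roots vanish. For `S < A` it begins `A,S` when `f` is false and `A,A,A,S`
when `f` is true, so `A ≠ S` rules out every pattern.
-/

open Function Complex

theorem eq_of_antitone_comp_of_map_univ_eq {α β : Type*} [LinearOrder β] {key : α → β}
    (hkey : Injective key) {n : ℕ} {v w : Fin n → α} (hv : Antitone (key ∘ v))
    (hw : Antitone (key ∘ w)) (h : Finset.univ.val.map v = Finset.univ.val.map w) : v = w := by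
  have hperm : (List.ofFn v).Perm (List.ofFn w) := by
    rwa [← Multiset.coe_eq_coe, ← Fin.univ_val_map, ← Fin.univ_val_map]
  have hkeys : List.ofFn (key ∘ v) = List.ofFn (key ∘ w) := by
    refine List.Perm.eq_of_sortedGE hv.sortedGE_ofFn hw.sortedGE_ofFn ?_
    simpa only [List.map_ofFn] using hperm.map key
  exact hkey.comp_left (List.ofFn_injective hkeys)

noncomputable def ω : ℂ := exp (2 * Real.pi * I / 3)

lemma ω_eq_exp_ofReal_mul_I : ω = exp ((2 * Real.pi / 3 : ℝ) * I) := by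
  rw [ω]; push_cast; ring_nf

lemma ω_re : ω.re = -(1 / 2) := by
  rw [ω_eq_exp_ofReal_mul_I, exp_ofReal_mul_I_re,
    show 2 * Real.pi / 3 = Real.pi - Real.pi / 3 by ring, Real.cos_pi_sub, Real.cos_pi_div_three]

lemma ω_im : ω.im = √3 / 2 := by
  rw [ω_eq_exp_ofReal_mul_I, exp_ofReal_mul_I_im,
    show 2 * Real.pi / 3 = Real.pi - Real.pi / 3 by ring, Real.sin_pi_sub, Real.sin_pi_div_three]

lemma ω_sq_re : (ω ^ 2).re = -(1 / 2) := by
  rw [sq, mul_re, ω_re, ω_im]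
  nlinarith [Real.mul_self_sqrt (show (0 : ℝ) ≤ 3 by norm_num)]

lemma ω_sq_im : (ω ^ 2).im = -(√3 / 2) := by
  rw [sq, mul_im, ω_re, ω_im]; ring

/-- Sorting by nonincreasing `(re, im)` means exactly that `lexKey` is antitone. -/
def lexKey (z : ℂ) : ℝ ×ₗ ℝ := toLex (z.re, z.im)

lemma lexKey_le_lexKey_iff {z w : ℂ} :
    lexKey z ≤ lexKey w ↔ z.re < w.re ∨ z.re = w.re ∧ z.im ≤ w.im :=
  Prod.Lex.toLex_le_toLex

lemma lexKey_injective : Injective lexKey := fun z w h => by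
  simpa [lexKey, Complex.ext_iff] using h

lemma lexKey_ofReal_le_ofReal {s t : ℝ} (h : s ≤ t) : lexKey s ≤ lexKey t := by
  rcases h.lt_or_eq with h | rfl
  · exact lexKey_le_lexKey_iff.2 (Or.inl (by simpa using h))
  · exact le_rfl

lemma lexKey_ofReal_mul_ω_le_ofReal {s t : ℝ} (hs : 0 ≤ s) (ht : 0 ≤ t) :
    lexKey (s * ω) ≤ lexKey t := by
  rcases hs.eq_or_lt with rfl | hs
  · simpa using lexKey_ofReal_le_ofReal ht
  · refine lexKey_le_lexKey_iff.2 (Or.inl ?_)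
    rw [re_ofReal_mul, ω_re, ofReal_re]
    linarith

lemma lexKey_mul_ω_sq_le_mul_ω {t : ℝ} (ht : 0 ≤ t) :
    lexKey (t * ω ^ 2) ≤ lexKey (t * ω) := by
  refine lexKey_le_lexKey_iff.2 (Or.inr ⟨?_, ?_⟩)
  · rw [re_ofReal_mul, re_ofReal_mul, ω_re, ω_sq_re]
  · rw [im_ofReal_mul, im_ofReal_mul, ω_im, ω_sq_im]
    have : 0 ≤ t * (√3 / 2) := by positivity
    linarith

lemma lexKey_mul_ω_le_mul_ω_sq {s t : ℝ} (h : s < t) :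
    lexKey (t * ω) ≤ lexKey (s * ω ^ 2) := by
  refine lexKey_le_lexKey_iff.2 (Or.inl ?_)
  rw [re_ofReal_mul, re_ofReal_mul, ω_re, ω_sq_re]
  linarith

lemma ofReal_ne_ofReal_mul_ω (s : ℝ) {t : ℝ} (ht : 0 < t) : (s : ℂ) ≠ t * ω := fun h =>
  ht.ne' (by simpa [ω_im] using congrArg im h)

lemma ofReal_mul_ω_ne_mul_ω_sq {t : ℝ} (ht : 0 < t) : (t : ℂ) * ω ≠ t * ω ^ 2 := fun h => by
  have him := congrArg im h
  simp only [im_ofReal_mul, ω_im, ω_sq_im] at him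
  have : 0 < t * (√3 / 2) := by positivity
  linarith

noncomputable def scaledCubeRoots (t : ℝ) (φ : Bool) : Multiset ℂ :=
  if φ then {(t : ℂ), (t : ℂ), (t : ℂ)} else {(t : ℂ), t * ω, t * ω ^ 2}

lemma cubeRootMultiset_eq_scaledCubeRoots (c : ℝ) (φ : Bool) :
    cubeRootMultiset c φ = scaledCubeRoots (c ^ ((1 : ℝ) / 3)) φ := rfl

lemma scaledCubeRoots_zero (φ : Bool) : scaledCubeRoots 0 φ = scaledCubeRoots 0 true := by
  cases φ <;> simp [scaledCubeRoots]

lemma eq_vecCons_of_antitone_lexKey {lam : Fin 6 → ℂ} (hlam : Antitone (lexKey ∘ lam))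
    {c₀ c₁ c₂ c₃ c₄ c₅ : ℂ} (hmap : Finset.univ.val.map lam = {c₀, c₁, c₂, c₃, c₄, c₅})
    (h₁ : lexKey c₁ ≤ lexKey c₀) (h₂ : lexKey c₂ ≤ lexKey c₁) (h₃ : lexKey c₃ ≤ lexKey c₂)
    (h₄ : lexKey c₄ ≤ lexKey c₃) (h₅ : lexKey c₅ ≤ lexKey c₄) :
    lam = ![c₀, c₁, c₂, c₃, c₄, c₅] := by
  refine eq_of_antitone_comp_of_map_univ_eq lexKey_injective hlam ?_ ?_
  · rw [Fin.antitone_iff_succ_le]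
    simp [Fin.forall_fin_succ, h₁, h₂, h₃, h₄, h₅]
  · rw [hmap]
    rfl

section SortedEnumeration

variable {lam : Fin 6 → ℂ} {s t : ℝ}

lemma eq_of_map_eq_true_true (hlam : Antitone (lexKey ∘ lam)) (hst : s ≤ t)
    (h : Finset.univ.val.map lam = scaledCubeRoots t true + scaledCubeRoots s true) :
    lam = ![(t : ℂ), t, t, s, s, s] :=
  eq_vecCons_of_antitone_lexKey hlam h le_rfl le_rfl (lexKey_ofReal_le_ofReal hst) le_rfl le_rfl

lemma eq_of_map_eq_true_false (hlam : Antitone (lexKey ∘ lam)) (hs : 0 ≤ s) (hst : s ≤ t)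
    (h : Finset.univ.val.map lam = scaledCubeRoots t true + scaledCubeRoots s false) :
    lam = ![(t : ℂ), t, t, s, s * ω, s * ω ^ 2] :=
  eq_vecCons_of_antitone_lexKey hlam h le_rfl le_rfl (lexKey_ofReal_le_ofReal hst)
    (lexKey_ofReal_mul_ω_le_ofReal hs hs) (lexKey_mul_ω_sq_le_mul_ω hs)

lemma eq_of_map_eq_false_true (hlam : Antitone (lexKey ∘ lam)) (hs : 0 ≤ s) (hst : s ≤ t)
    (h : Finset.univ.val.map lam = scaledCubeRoots t false + scaledCubeRoots s true) :
    lam = ![(t : ℂ), s, s, s, t * ω, t * ω ^ 2] := by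
  refine eq_vecCons_of_antitone_lexKey hlam (h.trans ?_) (lexKey_ofReal_le_ofReal hst) le_rfl
    le_rfl (lexKey_ofReal_mul_ω_le_ofReal (hs.trans hst) hs)
    (lexKey_mul_ω_sq_le_mul_ω (hs.trans hst))
  simp only [scaledCubeRoots, Bool.false_eq_true, ↓reduceIte, Multiset.insert_eq_cons,
    ← Multiset.singleton_add]
  ac_rfl

lemma eq_of_map_eq_false_false (hlam : Antitone (lexKey ∘ lam)) (hs : 0 ≤ s) (hst : s < t)
    (h : Finset.univ.val.map lam = scaledCubeRoots t false + scaledCubeRoots s false) :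
    lam = ![(t : ℂ), s, s * ω, s * ω ^ 2, t * ω, t * ω ^ 2] := by
  refine eq_vecCons_of_antitone_lexKey hlam (h.trans ?_) (lexKey_ofReal_le_ofReal hst.le)
    (lexKey_ofReal_mul_ω_le_ofReal hs hs) (lexKey_mul_ω_sq_le_mul_ω hs)
    (lexKey_mul_ω_le_mul_ω_sq hst) (lexKey_mul_ω_sq_le_mul_ω (hs.trans hst.le))
  simp only [scaledCubeRoots, Bool.false_eq_true, ↓reduceIte, Multiset.insert_eq_cons,
    ← Multiset.singleton_add]
  ac_rfl

lemma eq_of_map_eq_false_false_self (hlam : Antitone (lexKey ∘ lam)) (ht : 0 ≤ t)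
    (h : Finset.univ.val.map lam = scaledCubeRoots t false + scaledCubeRoots t false) :
    lam = ![(t : ℂ), t, t * ω, t * ω, t * ω ^ 2, t * ω ^ 2] := by
  refine eq_vecCons_of_antitone_lexKey hlam (h.trans ?_) le_rfl
    (lexKey_ofReal_mul_ω_le_ofReal ht ht) le_rfl (lexKey_mul_ω_sq_le_mul_ω ht) le_rfl
  simp only [scaledCubeRoots, Bool.false_eq_true, ↓reduceIte, Multiset.insert_eq_cons,
    ← Multiset.singleton_add]
  ac_rfl

def SortedPattern (lam : Fin 6 → ℂ) : Prop :=
  (lam 0 = lam 1 ∧ lam 1 = lam 2 ∧ lam 2 = lam 3 ∧ lam 3 = lam 4 ∧ lam 4 = lam 5) ∨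
  (lam 0 = lam 1 ∧ lam 1 = lam 2 ∧ lam 2 = lam 3 ∧ lam 3 ≠ lam 4 ∧ lam 4 ≠ lam 5) ∨
  (lam 0 = lam 1 ∧ lam 1 ≠ lam 2 ∧ lam 2 = lam 3 ∧ lam 3 ≠ lam 4 ∧ lam 4 = lam 5)

lemma sortedPattern_of_map_eq_self (hlam : Antitone (lexKey ∘ lam)) (ht : 0 ≤ t) (f g : Bool)
    (h : Finset.univ.val.map lam = scaledCubeRoots t f + scaledCubeRoots t g) :
    SortedPattern lam := by
  rcases ht.eq_or_lt with rfl | ht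
  · rw [scaledCubeRoots_zero f, scaledCubeRoots_zero g] at h
    simp [eq_of_map_eq_true_true hlam le_rfl h, SortedPattern]
  have hω := ofReal_ne_ofReal_mul_ω t ht
  have hω_sq := ofReal_mul_ω_ne_mul_ω_sq ht
  cases f <;> cases g
  · simp [eq_of_map_eq_false_false_self hlam ht.le h, SortedPattern, hω, hω_sq]
  · simp [eq_of_map_eq_false_true hlam ht.le le_rfl h, SortedPattern, hω, hω_sq]
  · simp [eq_of_map_eq_true_false hlam ht.le le_rfl h, SortedPattern, hω, hω_sq]
  · simp [eq_of_map_eq_true_true hlam le_rfl h, SortedPattern]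

lemma not_sortedPattern_of_lt (hlam : Antitone (lexKey ∘ lam)) (hs : 0 ≤ s) (hst : s < t)
    (f g : Bool)
    (h : Finset.univ.val.map lam = scaledCubeRoots t f + scaledCubeRoots s g) :
    ¬ SortedPattern lam := by
  have hne : (t : ℂ) ≠ s := by exact_mod_cast hst.ne'
  cases f <;> cases g
  · simp [eq_of_map_eq_false_false hlam hs hst h, SortedPattern, hne]
  · simp [eq_of_map_eq_false_true hlam hs hst.le h, SortedPattern, hne]
  · simp [eq_of_map_eq_true_false hlam hs hst.le h, SortedPattern, hne]
  · simp [eq_of_map_eq_true_true hlam hst.le h, SortedPattern, hne]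

end SortedEnumeration

/-- Let `a, σ ≥ 0`, let `f, g` be Boolean flags, and let
`λ_1, …, λ_6` (here `lam 0, …, lam 5`) be the six elements of the multiset
`R(a, f) ∪ R(σ, g)` listed with nonincreasing real parts, ties broken by nonincreasing
imaginary parts. Then `a = σ` iff one of the three sorted equality patterns
(i) `λ₁=λ₂=λ₃=λ₄=λ₅=λ₆`, (ii) `λ₁=λ₂=λ₃=λ₄, λ₄≠λ₅, λ₅≠λ₆`,
(iii) `λ₁=λ₂≠λ₃=λ₄≠λ₅=λ₆` holds. -/
theorem eq_iff_sorted_cube_root_pattern (a σ : ℝ) (ha : 0 ≤ a) (hσ : 0 ≤ σ)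
    (f g : Bool) (lam : Fin 6 → ℂ)
    (hmulti : Finset.univ.val.map lam = cubeRootMultiset a f + cubeRootMultiset σ g)
    (hsorted : ∀ i j : Fin 6, i ≤ j →
      (lam j).re < (lam i).re ∨ ((lam j).re = (lam i).re ∧ (lam j).im ≤ (lam i).im)) :
    a = σ ↔
      ((lam 0 = lam 1 ∧ lam 1 = lam 2 ∧ lam 2 = lam 3 ∧ lam 3 = lam 4 ∧ lam 4 = lam 5) ∨
       (lam 0 = lam 1 ∧ lam 1 = lam 2 ∧ lam 2 = lam 3 ∧ lam 3 ≠ lam 4 ∧ lam 4 ≠ lam 5) ∨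
       (lam 0 = lam 1 ∧ lam 1 ≠ lam 2 ∧ lam 2 = lam 3 ∧ lam 3 ≠ lam 4 ∧ lam 4 = lam 5)) := by
  have hlam : Antitone (lexKey ∘ lam) := fun i j hij =>
    lexKey_le_lexKey_iff.2 (hsorted i j hij)
  simp only [cubeRootMultiset_eq_scaledCubeRoots] at hmulti
  change a = σ ↔ SortedPattern lam
  have hcbrt_lt {x y : ℝ} (hx : 0 ≤ x) (hxy : x < y) : x ^ ((1 : ℝ) / 3) < y ^ ((1 : ℝ) / 3) :=
    Real.rpow_lt_rpow hx hxy (by norm_num)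
  rcases lt_trichotomy a σ with h | rfl | h
  · exact iff_of_false h.ne (not_sortedPattern_of_lt hlam (Real.rpow_nonneg ha _) (hcbrt_lt ha h)
      g f (by rwa [add_comm]))
  · exact iff_of_true rfl (sortedPattern_of_map_eq_self hlam (Real.rpow_nonneg ha _) f g hmulti)
  · exact iff_of_false h.ne' (not_sortedPattern_of_lt hlam (Real.rpow_nonneg hσ _) (hcbrt_lt hσ h)
      f g hmulti)
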